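/- arXiv:2012.15055 — 4 statements merged into one kernel-verified Lean document; each statement's English description precedes it below -/
import Mathlib

section
/- Let α ∈ (-1,1), ρ = sqrt(1-α²), and r(x) = sqrt((x-1)²+4α²x) for x ∈ (-1,1). Then the function x ↦ log(1+x) + log(4ρ/(ρ(1-x)+r(x))) is an antiderivative of x ↦ 2ρ/((1+x)·r(x)) on (-1,1); that is, its derivative equals 2ρ/((1+x)r(x)) for every x ∈ (-1,1). -/
open Real Set

lemma sub_one_sq_add_four_mul_mul_pos {a x : ℝ} (ha₀ : 0 ≤ a) (ha₁ : a ≤ 1)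
    (hx : x ∈ Ioo (-1 : ℝ) 1) :
    0 < (x - 1) ^ 2 + 4 * a * x := by
  obtain ⟨hx₁, hx₂⟩ := hx
  -- the radicand is at least (1 - x)² for x ≥ 0 and at least (1 + x)² for x < 0
  rcases le_or_gt 0 x with h | h
  · nlinarith
  · nlinarith [sq_nonneg (x + 1)]

lemma hasDerivAt_sqrt_sub_one_sq_add_four_mul_mul (a : ℝ) {x : ℝ}
    (h : 0 < (x - 1) ^ 2 + 4 * a * x) :
    HasDerivAt (fun y => √((y - 1) ^ 2 + 4 * a * y))
      ((x - 1 + 2 * a) / √((x - 1) ^ 2 + 4 * a * x)) x := by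
  have hq : HasDerivAt (fun y => (y - 1) ^ 2 + 4 * a * y) (2 * (x - 1) + 4 * a) x := by
    simpa using (((hasDerivAt_id x).sub_const 1).fun_pow 2).fun_add
      ((hasDerivAt_id x).const_mul (4 * a))
  convert hq.sqrt h.ne' using 1
  field_simp
  ring

lemma hasDerivAt_log_add_log_div {ρ a x : ℝ} (hρ : 0 < ρ) (hρa : ρ ^ 2 = 1 - a)
    (hx : x ∈ Ioo (-1 : ℝ) 1) (h : 0 < (x - 1) ^ 2 + 4 * a * x) :
    HasDerivAt
      (fun y => log (1 + y) + log (4 * ρ / (ρ * (1 - y) + √((y - 1) ^ 2 + 4 * a * y))))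
      (2 * ρ / ((1 + x) * √((x - 1) ^ 2 + 4 * a * x))) x := by
  obtain ⟨hx₁, hx₂⟩ := hx
  have h1x : 0 < 1 + x := by linarith
  have hr : 0 < √((x - 1) ^ 2 + 4 * a * x) := sqrt_pos.2 h
  have hD : 0 < ρ * (1 - x) + √((x - 1) ^ 2 + 4 * a * x) := by nlinarith
  have hden : HasDerivAt (fun y => ρ * (1 - y) + √((y - 1) ^ 2 + 4 * a * y))
      (ρ * -1 + (x - 1 + 2 * a) / √((x - 1) ^ 2 + 4 * a * x)) x :=
    (((hasDerivAt_id x).const_sub 1).const_mul ρ).add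
      (hasDerivAt_sqrt_sub_one_sq_add_four_mul_mul a h)
  have hlog₁ : HasDerivAt (fun y => log (1 + y)) (1 / (1 + x)) x := by
    simpa using ((hasDerivAt_id x).const_add 1).log h1x.ne'
  have hlog₂ := ((hasDerivAt_const x (4 * ρ)).fun_div hden hD.ne').log
    (div_pos (by positivity) hD).ne'
  refine (hlog₁.fun_add hlog₂).congr_deriv ?_
  have hr2 : √((x - 1) ^ 2 + 4 * a * x) ^ 2 = (x - 1) ^ 2 + 4 * a * x := sq_sqrt h.le
  set r := √((x - 1) ^ 2 + 4 * a * x)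
  field_simp
  linear_combination 4 * ρ * (hr2 + (2 * x - 2) * hρa)

theorem stmt_4_general (α : ℝ) (hα : α ∈ Set.Ioo (-1 : ℝ) 1) (x : ℝ)
    (hx : x ∈ Set.Ioo (-1 : ℝ) 1) :
    HasDerivAt
      (fun y : ℝ => Real.log (1 + y) +
        Real.log (4 * Real.sqrt (1 - α ^ 2) /
          (Real.sqrt (1 - α ^ 2) * (1 - y) + Real.sqrt ((y - 1) ^ 2 + 4 * α ^ 2 * y))))
      (2 * Real.sqrt (1 - α ^ 2) /
        ((1 + x) * Real.sqrt ((x - 1) ^ 2 + 4 * α ^ 2 * x))) x := by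
  have hα2 : α ^ 2 < 1 := by nlinarith [hα.1, hα.2]
  exact hasDerivAt_log_add_log_div (sqrt_pos.2 (by linarith)) (sq_sqrt (by linarith)) hx
    (sub_one_sq_add_four_mul_mul_pos (sq_nonneg α) hα2.le hx)

theorem stmt_4 (α : ℝ) (hα : α ∈ Set.Ioo (-1 : ℝ) 1) (hα0 : α ≠ 0) (x : ℝ)
    (hx : x ∈ Set.Ioo (-1 : ℝ) 1) :
    HasDerivAt
      (fun y : ℝ => Real.log (1 + y) +
        Real.log (4 * Real.sqrt (1 - α ^ 2) /
          (Real.sqrt (1 - α ^ 2) * (1 - y) + Real.sqrt ((y - 1) ^ 2 + 4 * α ^ 2 * y))))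
      (2 * Real.sqrt (1 - α ^ 2) /
        ((1 + x) * Real.sqrt ((x - 1) ^ 2 + 4 * α ^ 2 * x))) x :=
  stmt_4_general α hα x hx
end

section
/- Let α ∈ (-1,1), ρ = sqrt(1-α²), r(x) = sqrt((x-1)²+4α²x), and h(x) = -α(x+1)/r(x). Then |h(x)| is nondecreasing on (-1,1), and |h(x)| ≤ 1 there. -/
theorem stmt_6 (α : ℝ) (hα : α ∈ Set.Ioo (-1 : ℝ) 1) (hα0 : α ≠ 0) :
    MonotoneOn (fun x : ℝ => |(-α * (x + 1) / Real.sqrt ((x - 1) ^ 2 + 4 * α ^ 2 * x))|)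
      (Set.Ioo (-1 : ℝ) 1) ∧
    ∀ x ∈ Set.Ioo (-1 : ℝ) 1,
      |(-α * (x + 1) / Real.sqrt ((x - 1) ^ 2 + 4 * α ^ 2 * x))| ≤ 1 := by
  obtain ⟨ha1, ha2⟩ := hα
  have hαsq : (0 : ℝ) < 1 - α ^ 2 := by nlinarith
  have hD : ∀ x ∈ Set.Ioo (-1 : ℝ) 1, 0 < (x - 1) ^ 2 + 4 * α ^ 2 * x := by
    intro x hx
    obtain ⟨h1, h2⟩ := hx
    have hx1 : (0 : ℝ) < (x - 1) ^ 2 := by nlinarith [sq_nonneg (x-1)]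
    nlinarith [mul_pos hαsq hx1, sq_nonneg (α * (x + 1))]
  have hsq : ∀ x ∈ Set.Ioo (-1 : ℝ) 1,
      (|(-α * (x + 1) / Real.sqrt ((x - 1) ^ 2 + 4 * α ^ 2 * x))|) ^ 2 =
        α ^ 2 * (x + 1) ^ 2 / ((x - 1) ^ 2 + 4 * α ^ 2 * x) := by
    intro x hx
    rw [sq_abs, div_pow, Real.sq_sqrt (hD x hx).le]
    ring_nf
  constructor
  · intro x hx y hy hxy
    have hDx := hD x hx
    have hDy := hD y hy
    have hx2 := hsq x hx
    have hy2 := hsq y hy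
    have h1xy : (0 : ℝ) < 1 - x * y := by
      nlinarith [mul_pos (sub_pos.2 hx.2) (by linarith [hy.1] : (0:ℝ) < 1 + y),
        mul_pos (by linarith [hx.1] : (0:ℝ) < 1 + x) (sub_pos.2 hy.2)]
    have key : α ^ 2 * (x + 1) ^ 2 / ((x - 1) ^ 2 + 4 * α ^ 2 * x) ≤
        α ^ 2 * (y + 1) ^ 2 / ((y - 1) ^ 2 + 4 * α ^ 2 * y) := by
      rw [div_le_div_iff₀ hDx hDy]
      have e1 : 0 ≤ (y - x) * (1 - x * y) * (1 - α ^ 2) * α ^ 2 :=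
        mul_nonneg (mul_nonneg (mul_nonneg (sub_nonneg.2 hxy) h1xy.le) hαsq.le)
          (sq_nonneg α)
      nlinarith [e1]
    have h2 : (|(-α * (x + 1) / Real.sqrt ((x - 1) ^ 2 + 4 * α ^ 2 * x))|) ^ 2 ≤
        (|(-α * (y + 1) / Real.sqrt ((y - 1) ^ 2 + 4 * α ^ 2 * y))|) ^ 2 := by
      rw [hx2, hy2]; exact key
    have hnx := abs_nonneg (-α * (x + 1) / Real.sqrt ((x - 1) ^ 2 + 4 * α ^ 2 * x))
    have hny := abs_nonneg (-α * (y + 1) / Real.sqrt ((y - 1) ^ 2 + 4 * α ^ 2 * y))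
    simp only
    nlinarith [h2, hnx, hny]
  · intro x hx
    have hDx := hD x hx
    have hx2 := hsq x hx
    have hle : α ^ 2 * (x + 1) ^ 2 / ((x - 1) ^ 2 + 4 * α ^ 2 * x) ≤ 1 := by
      rw [div_le_one hDx]
      nlinarith [mul_nonneg hαsq.le (sq_nonneg (x - 1))]
    have hnx := abs_nonneg (-α * (x + 1) / Real.sqrt ((x - 1) ^ 2 + 4 * α ^ 2 * x))
    nlinarith [hx2 ▸ hle, hnx]
end

section
/- Let α ∈ (-1,1) and let Φ_m(z;α) be defined by the Szegő recurrence Φ_0 = 1, Φ_0* = 1, Φ_{m+1}(z) = zΦ_m(z) - αΦ_m*(z), Φ_{m+1}*(z) = Φ_m*(z) - αzΦ_m(z). Set ρ = sqrt(1-α²) and φ_m(z;α) = ρ^{-m}Φ_m(z;α). Then for every m ≥ 0 and every complex z with √z defined via the principal branch, φ_m(z;α) = z^{m/2}( U_m((z+1)/(2ρ√z)) - ((1+α)/(ρ√z))·U_{m-1}((z+1)/(2ρ√z)) ), where U_m is the Chebyshev polynomial of the second kind and U_{-1} ≡ 0. -/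
/-!
Substitute `z = s²` and `x = (s² + 1) / (2ρs)`, so that `2ρs·x = s² + 1` and `ρ² = 1 - α²`.
Under these two relations one step of the Szegő recurrence for the pair `(Φ_m, Φ_m^*)` is
exactly the three-term recurrence `U_{m+1} = 2x U_m - U_{m-1}`, so the formula is proved for
`Φ_m` and `Φ_m^*` simultaneously by induction.
-/

/-- Monic Geronimus polynomials `Φ_m` and their reciprocals `Φ_m^*`, defined by the
Szegő recurrence with constant recurrence coefficient `α`. -/
noncomputable def geronimusPhi (α : ℂ) : ℕ → (ℂ → ℂ) × (ℂ → ℂ)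
  | 0 => (fun _ => 1, fun _ => 1)
  | m + 1 =>
      (fun z => z * (geronimusPhi α m).1 z - α * (geronimusPhi α m).2 z,
       fun z => (geronimusPhi α m).2 z - α * z * (geronimusPhi α m).1 z)

theorem geronimusPhi_fst_succ (α : ℂ) (m : ℕ) (z : ℂ) :
    (geronimusPhi α (m + 1)).1 z = z * (geronimusPhi α m).1 z - α * (geronimusPhi α m).2 z :=
  rfl

theorem geronimusPhi_snd_succ (α : ℂ) (m : ℕ) (z : ℂ) :
    (geronimusPhi α (m + 1)).2 z = (geronimusPhi α m).2 z - α * z * (geronimusPhi α m).1 z :=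
  rfl

open Polynomial Polynomial.Chebyshev in
theorem geronimusPhi_sq_eq_chebyshevU {α ρ s x : ℂ} (hρ : ρ ≠ 0) (hρα : ρ ^ 2 = 1 - α ^ 2)
    (hx : 2 * ρ * s * x = s ^ 2 + 1) (m : ℕ) :
    (geronimusPhi α m).1 (s ^ 2) =
        (ρ * s) ^ m * ((U ℂ m).eval x - (1 + α) / (ρ * s) * (U ℂ ((m : ℤ) - 1)).eval x) ∧
      (geronimusPhi α m).2 (s ^ 2) =
        (ρ * s) ^ m * ((U ℂ m).eval x - (1 + α) * s / ρ * (U ℂ ((m : ℤ) - 1)).eval x) := by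
  have hs : s ≠ 0 := by
    rintro rfl
    simp at hx
  induction m with
  | zero => simp [geronimusPhi]
  | succ m ih =>
    obtain ⟨ih₁, ih₂⟩ := ih
    rw [geronimusPhi_fst_succ, geronimusPhi_snd_succ, ih₁, ih₂, Nat.cast_succ,
      add_sub_cancel_right, U_add_one]
    simp only [eval_sub, eval_mul, eval_X, eval_ofNat]
    constructor
    · field_simp
      linear_combination (s * ρ) ^ m * s * (s * (U ℂ ((m : ℤ) - 1)).eval x * hρα
        - ρ * (U ℂ m).eval x * hx)
    · field_simp
      linear_combination (ρ * s) ^ m * (s * (U ℂ ((m : ℤ) - 1)).eval x * hρα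
        - ρ * (U ℂ m).eval x * hx)

theorem stmt_10 (α : ℝ) (hα : α ∈ Set.Ioo (-1 : ℝ) 1) (m : ℕ) (z : ℂ) (hz : z ≠ 0) :
    ((Real.sqrt (1 - α ^ 2) : ℂ)) ^ (-(m : ℤ)) * (geronimusPhi (α : ℂ) m).1 z
      = (z ^ ((1 : ℂ) / 2)) ^ m *
          ((Polynomial.Chebyshev.U ℂ m).eval
              ((z + 1) / (2 * (Real.sqrt (1 - α ^ 2) : ℂ) * z ^ ((1 : ℂ) / 2)))
            - ((1 + (α : ℂ)) / ((Real.sqrt (1 - α ^ 2) : ℂ) * z ^ ((1 : ℂ) / 2))) *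
                (Polynomial.Chebyshev.U ℂ ((m : ℤ) - 1)).eval
                  ((z + 1) / (2 * (Real.sqrt (1 - α ^ 2) : ℂ) * z ^ ((1 : ℂ) / 2)))) := by
  set ρ : ℂ := (Real.sqrt (1 - α ^ 2) : ℂ)
  have hsz : (z ^ ((1 : ℂ) / 2)) ^ 2 = z := by
    rw [one_div]
    exact_mod_cast Complex.cpow_nat_inv_pow z two_ne_zero
  set s : ℂ := z ^ ((1 : ℂ) / 2)
  have hpos : 0 < 1 - α ^ 2 := by nlinarith [hα.1, hα.2]
  have hρ : ρ ≠ 0 := Complex.ofReal_ne_zero.mpr (Real.sqrt_ne_zero'.mpr hpos)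
  have hρα : ρ ^ 2 = 1 - (α : ℂ) ^ 2 := by
    rw [← Complex.ofReal_pow, Real.sq_sqrt hpos.le]
    norm_cast
  have hs : s ≠ 0 := by
    intro h
    simp [← hsz, h] at hz
  have hx : 2 * ρ * s * ((z + 1) / (2 * ρ * s)) = s ^ 2 + 1 := by
    rw [hsz]
    field_simp
  have key := (geronimusPhi_sq_eq_chebyshevU hρ hρα hx m).1
  rw [hsz] at key
  rw [key, zpow_neg, zpow_natCast, mul_pow, mul_assoc, inv_mul_cancel_left₀ (pow_ne_zero m hρ)]
end

section
/- Let α ∈ (-1,1) and φ_m(z;α), φ_m*(z;α) the orthonormal Geronimus polynomials as above. Set b_m(z) = φ_m(z;α)/φ_m*(z;α). With φ(z)=z+1+r(z), ψ(z)=z+1-r(z), ε(z)=ψ(z)/φ(z), and r(z) the branch of sqrt((z-1)²+4α²z) holomorphic off Δ_α with r(z)/z→1 at ∞, for every n ≥ 0 and z in the open unit disk: b_{n+1}(z) = (φ(z) - 2(1+α) - ε^{n+1}(z)(ψ(z) - 2(1+α))) / (φ(z) - 2(1+α)z - ε^{n+1}(z)(ψ(z) - 2(1+α)z)). -/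
/-!
The Szegő transfer matrix `[[z, -α], [-α z, 1]]` has eigenvalues `(z + 1 ± r) / 2` with
`r² = (z - 1)² + 4α²z`, so `Φ_m` and `Φ_m^*` are combinations of the `m`-th powers of
`φ = z + 1 + r` and `ψ = z + 1 - r`. Dividing numerator and denominator of `Φ_m / Φ_m^*` by
`2^{m+1} r φ^m` gives the formula in terms of `ε = ψ / φ`. The divisions are harmless because
in the unit disk `r ≠ 0` (the roots of the discriminant lie on the unit circle) and `φ ≠ 0`
(`φ = 0` forces `z = 0` or `α² = 1`, and `r 0 = 1`).
-/

lemma geronimusPhi_closed_form (a z r : ℂ) (hr : r ^ 2 = (z - 1) ^ 2 + 4 * a ^ 2 * z) (m : ℕ) :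
    2 ^ (m + 1) * r * (geronimusPhi a m).1 z
        = (z + 1 + r - 2 * (1 + a)) * (z + 1 + r) ^ m
          - (z + 1 - r - 2 * (1 + a)) * (z + 1 - r) ^ m ∧
      2 ^ (m + 1) * r * (geronimusPhi a m).2 z
        = (z + 1 + r - 2 * (1 + a) * z) * (z + 1 + r) ^ m
          - (z + 1 - r - 2 * (1 + a) * z) * (z + 1 - r) ^ m := by
  induction m with
  | zero => constructor <;> (simp only [geronimusPhi]; ring)
  | succ m ih =>
    obtain ⟨h1, h2⟩ := ih
    constructor
    · show 2 ^ (m + 2) * r * (z * (geronimusPhi a m).1 z - a * (geronimusPhi a m).2 z) = _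
      linear_combination 2 * z * h1 - 2 * a * h2 + ((z + 1 - r) ^ m - (z + 1 + r) ^ m) * hr
    · show 2 ^ (m + 2) * r * ((geronimusPhi a m).2 z - a * z * (geronimusPhi a m).1 z) = _
      linear_combination 2 * h2 - 2 * a * z * h1 + ((z + 1 - r) ^ m - (z + 1 + r) ^ m) * hr

lemma sub_sub_div_pow_mul_eq {μ : ℂ} (hμ : μ ≠ 0) (ν c : ℂ) (m : ℕ) :
    μ - c - (ν / μ) ^ m * (ν - c) = ((μ - c) * μ ^ m - (ν - c) * ν ^ m) / μ ^ m := by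
  rw [div_pow]
  field_simp

lemma geronimusPhi_div_eq (a z r : ℂ) (hr : r ^ 2 = (z - 1) ^ 2 + 4 * a ^ 2 * z) (hr0 : r ≠ 0)
    (hφ : z + 1 + r ≠ 0) (m : ℕ) :
    (geronimusPhi a m).1 z / (geronimusPhi a m).2 z
      = (z + 1 + r - 2 * (1 + a) - ((z + 1 - r) / (z + 1 + r)) ^ m * (z + 1 - r - 2 * (1 + a)))
        / (z + 1 + r - 2 * (1 + a) * z
            - ((z + 1 - r) / (z + 1 + r)) ^ m * (z + 1 - r - 2 * (1 + a) * z)) := by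
  obtain ⟨h1, h2⟩ := geronimusPhi_closed_form a z r hr m
  have hc : (2 : ℂ) ^ (m + 1) * r ≠ 0 := mul_ne_zero (pow_ne_zero _ two_ne_zero) hr0
  rw [sub_sub_div_pow_mul_eq hφ, sub_sub_div_pow_mul_eq hφ,
    div_div_div_cancel_right₀ (pow_ne_zero _ hφ), ← h1, ← h2, mul_div_mul_left _ _ hc]

lemma sub_one_sq_add_four_mul_sq_mul_ne_zero {α : ℝ} (hα : α ^ 2 ≤ 1) {z : ℂ} (hz : ‖z‖ < 1) :
    (z - 1) ^ 2 + 4 * (α : ℂ) ^ 2 * z ≠ 0 := by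
  intro h
  have hxy : z.re ^ 2 + z.im ^ 2 < 1 := by
    have := (sq_lt_one_iff₀ (norm_nonneg z)).2 hz
    rwa [Complex.sq_norm, Complex.normSq_apply, ← sq, ← sq] at this
  have hre := congrArg Complex.re h
  have him := congrArg Complex.im h
  simp only [sq, Complex.add_re, Complex.add_im, Complex.mul_re, Complex.mul_im, Complex.sub_re,
    Complex.sub_im, Complex.one_re, Complex.one_im, Complex.ofReal_re, Complex.ofReal_im,
    Complex.re_ofNat, Complex.im_ofNat, Complex.zero_re, Complex.zero_im] at hre him
  -- with `c = 4α² - 2 ∈ [-2, 2]` the equation reads `z² + c z + 1 = 0`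
  have him' : z.im * (2 * z.re + (4 * α ^ 2 - 2)) = 0 := by linear_combination him
  rcases mul_eq_zero.mp him' with hy | hx
  · have hx : z.re ^ 2 + (4 * α ^ 2 - 2) * z.re + 1 = 0 := by
      rw [hy] at hre; linear_combination hre
    rw [hy] at hxy
    rcases le_or_gt z.re 0 with hneg | hpos
    · nlinarith [mul_nonneg (neg_nonneg.mpr hneg) (sub_nonneg.mpr hα)]
    · nlinarith [mul_nonneg (sq_nonneg α) hpos.le]
  · nlinarith

lemma add_one_add_apply_ne_zero {a : ℂ} (ha : a ^ 2 ≠ 1) {r : ℂ → ℂ} (hr0 : r 0 = 1) {z : ℂ}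
    (hr : r z ^ 2 = (z - 1) ^ 2 + 4 * a ^ 2 * z) : z + 1 + r z ≠ 0 := by
  intro h
  have hrz : r z = -(z + 1) := by linear_combination h
  have hz : z * (a ^ 2 - 1) = 0 := by
    rw [hrz] at hr
    linear_combination -hr / 4
  obtain rfl : z = 0 := (mul_eq_zero.mp hz).resolve_right (sub_ne_zero.mpr ha)
  norm_num [hr0] at hrz

theorem stmt_11_general (α : ℝ) (hα : α ∈ Set.Ioo (-1 : ℝ) 1) (r : ℂ → ℂ)
    (hr_sq : ∀ z ∈ Metric.ball (0 : ℂ) 1, (r z) ^ 2 = (z - 1) ^ 2 + 4 * (α : ℂ) ^ 2 * z)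
    (hr0 : r 0 = 1) (n : ℕ) (z : ℂ) (hz : z ∈ Metric.ball (0 : ℂ) 1) :
    (geronimusPhi (α : ℂ) (n + 1)).1 z / (geronimusPhi (α : ℂ) (n + 1)).2 z
      = ((z + 1 + r z) - 2 * (1 + (α : ℂ))
            - (((z + 1 - r z) / (z + 1 + r z)) ^ (n + 1)) * ((z + 1 - r z) - 2 * (1 + (α : ℂ))))
        / ((z + 1 + r z) - 2 * (1 + (α : ℂ)) * z
            - (((z + 1 - r z) / (z + 1 + r z)) ^ (n + 1)) * ((z + 1 - r z) - 2 * (1 + (α : ℂ)) * z)) := by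
  have hz1 : ‖z‖ < 1 := mem_ball_zero_iff.mp hz
  have hα2 : α ^ 2 < 1 := (sq_lt_one_iff_abs_lt_one α).2 (abs_lt.2 hα)
  have hrz : r z ≠ 0 := by
    intro h0
    apply sub_one_sq_add_four_mul_sq_mul_ne_zero hα2.le hz1
    rw [← hr_sq z hz, h0, zero_pow two_ne_zero]
  have hφ : z + 1 + r z ≠ 0 :=
    add_one_add_apply_ne_zero (by exact_mod_cast hα2.ne) hr0 (hr_sq z hz)
  exact geronimusPhi_div_eq _ _ _ (hr_sq z hz) hrz hφ (n + 1)

theorem stmt_11 (α : ℝ) (hα : α ∈ Set.Ioo (-1 : ℝ) 1) (r : ℂ → ℂ)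
    (hr_cont : ContinuousOn r (Metric.ball (0 : ℂ) 1))
    (hr_sq : ∀ z ∈ Metric.ball (0 : ℂ) 1, (r z) ^ 2 = (z - 1) ^ 2 + 4 * (α : ℂ) ^ 2 * z)
    (hr0 : r 0 = 1) (n : ℕ) (z : ℂ) (hz : z ∈ Metric.ball (0 : ℂ) 1) :
    (geronimusPhi (α : ℂ) (n + 1)).1 z / (geronimusPhi (α : ℂ) (n + 1)).2 z
      = ((z + 1 + r z) - 2 * (1 + (α : ℂ))
            - (((z + 1 - r z) / (z + 1 + r z)) ^ (n + 1)) * ((z + 1 - r z) - 2 * (1 + (α : ℂ))))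
        / ((z + 1 + r z) - 2 * (1 + (α : ℂ)) * z
            - (((z + 1 - r z) / (z + 1 + r z)) ^ (n + 1)) * ((z + 1 - r z) - 2 * (1 + (α : ℂ)) * z)) :=
  stmt_11_general α hα r hr_sq hr0 n z hz
end
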